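/- arXiv:1911.02164 — 3 statements merged into one kernel-verified Lean document; each statement's English description precedes it below -/
import Mathlib

section
/- Let α ∈ BV_loc((a,b),ℂ) with supp(dα) = (a,b), and let r ∈ ℂ. If f is an r-balanced function on (a,b) satisfying f = 0 dα-almost everywhere on (a,b) (with respect to the total variation measure of dα), then f is identically zero on (a,b). -/
open Set Filter Function MeasureTheory Topology

noncomputable section

/-- The open interval `(a,b) ⊆ ℝ` determined by extended-real endpoints `a`, `b`. -/
def EI (a b : EReal) : Set ℝ := {x : ℝ | a < (x : EReal) ∧ (x : EReal) < b}

/-- The jump `Δ_{df}(x) = f⁺(x) - f⁻(x)` of a real-valued function. -/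
def jump (f : ℝ → ℝ) (x : ℝ) : ℝ := rightLim f x - leftLim f x

/-- The jump `Δ_{df}(x) = f⁺(x) - f⁻(x)` of a complex-valued function. -/
def jumpC (f : ℝ → ℂ) (x : ℝ) : ℂ := rightLim f x - leftLim f x

/-- `θ_z(x) = 1 - z² Δ_{dα}(x) Δ_{dβ}(x)`. -/
def theta (α β : ℝ → ℝ) (z x : ℝ) : ℝ := 1 - z ^ 2 * jump α x * jump β x

/-- `ω(x) = 1 - Δ_{dα}(x) Δ_{dβ}(x) / 4`. -/
def omegaFn (α β : ℝ → ℝ) (x : ℝ) : ℝ := 1 - jump α x * jump β x / 4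

/-- A real-valued function is `r`-balanced on `I`: it is of locally bounded variation and
`f(x) = r f⁻(x) + (1-r) f⁺(x)` for all `x ∈ I`. -/
def RBalanced (r : ℝ) (I : Set ℝ) (f : ℝ → ℝ) : Prop :=
  LocallyBoundedVariationOn f I ∧
    ∀ x ∈ I, f x = r * leftLim f x + (1 - r) * rightLim f x

/-- A complex-valued function is `r`-balanced on `I`. -/
def RBalancedC (r : ℂ) (I : Set ℝ) (f : ℝ → ℂ) : Prop :=
  LocallyBoundedVariationOn f I ∧
    ∀ x ∈ I, f x = r * leftLim f x + (1 - r) * rightLim f x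

/-- `ν` coincides on `[c,d]` with the Lebesgue–Stieltjes measure `df` generated by `f`,
determined by `df((x,y]) = f⁺(y) - f⁺(x)`. -/
def SMRepresents (ν : SignedMeasure ℝ) (f : ℝ → ℝ) (c d : ℝ) : Prop :=
  ∀ x ∈ Icc c d, ∀ y ∈ Icc c d, x ≤ y → ν (Ioc x y) = rightLim f y - rightLim f x

/-- The integral of `h` against the signed measure `ν` over the set `E`. -/
def sInt (ν : SignedMeasure ℝ) (h : ℝ → ℝ) (E : Set ℝ) : ℝ :=
  (∫ x in E, h x ∂ν.toJordanDecomposition.posPart) -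
    (∫ x in E, h x ∂ν.toJordanDecomposition.negPart)

/-- The equality of (locally finite, real Borel) measures `dg = ∑ j, (h j) d(β j)` on the
interval `I`, expressed via localizations to compact subintervals of `I`. -/
def MeasureEqOn (I : Set ℝ) {ι : Type} [Fintype ι] (g : ℝ → ℝ) (h β : ι → ℝ → ℝ) : Prop :=
  ∀ c ∈ I, ∀ d ∈ I, c < d →
    ∃ (νg : SignedMeasure ℝ) (ν : ι → SignedMeasure ℝ),
      SMRepresents νg g c d ∧ (∀ j, SMRepresents (ν j) (β j) c d) ∧
      ∀ E : Set ℝ, E ⊆ Ioc c d → MeasurableSet E → νg E = ∑ j, sInt (ν j) (h j) E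

/-- The equality of complex measures `dg = ∑ j, (h j) d(β j)` on `I`, encoded via real and
imaginary parts. -/
def MeasureEqOnC (I : Set ℝ) {ι : Type} [Fintype ι] (g : ℝ → ℂ) (h β : ι → ℝ → ℂ) : Prop :=
  MeasureEqOn I (fun x => (g x).re)
    (Sum.elim (fun j x => (h j x).re) (fun j x => -(h j x).im))
    (Sum.elim (fun j x => (β j x).re) (fun j x => (β j x).im)) ∧
  MeasureEqOn I (fun x => (g x).im)
    (Sum.elim (fun j x => (h j x).im) (fun j x => (h j x).re))
    (Sum.elim (fun j x => (β j x).re) (fun j x => (β j x).im))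

/-- The support of `dα` is all of `I`: no open subinterval of `I` is `dα`-null, i.e. on no
open subinterval of `I` do all one-sided limits of `α` coincide with a single constant. -/
def SuppFull (I : Set ℝ) (α : ℝ → ℂ) : Prop :=
  ∀ x ∈ I, ∀ ε > (0 : ℝ), Icc (x - ε) (x + ε) ⊆ I →
    ¬ (∀ p ∈ Ioo (x - ε) (x + ε), ∀ q ∈ Ioo (x - ε) (x + ε),
        rightLim α p = rightLim α q ∧ leftLim α p = rightLim α q)

/-- `u`, together with the representative `w` of `du/dα`, is an `r`-balanced solution of the
homogeneous equation `-d(du/dα) + u dβ = 0` on `I`: `u` and `w` are `r`-balanced,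
`du = w dα` (so `du ≪ dα` with `du/dα = w`), and `dw = u dβ`. -/
def IsHomSol (I : Set ℝ) (r : ℝ) (α β u w : ℝ → ℝ) : Prop :=
  RBalanced r I u ∧ RBalanced r I w ∧
  MeasureEqOn I u (fun _ : Fin 1 => w) (fun _ => α) ∧
  MeasureEqOn I w (fun _ : Fin 1 => u) (fun _ => β)

/-- `u`, together with the representative `w` of `du/dα`, is an `r`-balanced solution of
`-d(du/dα) + u dβ = dη` on `I` (complex-valued coefficients): `dw = u dβ - dη`. -/
def IsSolC (I : Set ℝ) (r : ℂ) (α β η u w : ℝ → ℂ) : Prop :=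
  RBalancedC r I u ∧ RBalancedC r I w ∧
  MeasureEqOnC I u (fun _ : Fin 1 => w) (fun _ => α) ∧
  MeasureEqOnC I w ![u, fun _ => (-1 : ℂ)] ![β, η]

/-- `y` solves the linear system `dy = dφ · y + dψ` on `I`, componentwise:
`d(y i) = ∑ j, (y j) d(φ i j) + dψ i`. -/
def IsSysSolC (I : Set ℝ) (n : ℕ) (φ : ℝ → Matrix (Fin n) (Fin n) ℂ)
    (ψ : ℝ → Fin n → ℂ) (y : ℝ → Fin n → ℂ) : Prop :=
  ∀ i : Fin n,
    MeasureEqOnC I (fun x => y x i)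
      (Sum.elim (fun j : Fin n => fun x => y x j) (fun _ : Unit => fun _ => (1 : ℂ)))
      (Sum.elim (fun j : Fin n => fun x => φ x i j) (fun _ : Unit => fun x => ψ x i))

/-- `Z_I(f) = {x ∈ I : f⁻(x) f⁺(x) ≤ 0}`, the set of sign-changing points of `f` in `I`. -/
def ZSet (f : ℝ → ℝ) (I : Set ℝ) : Set ℝ := {x ∈ I | leftLim f x * rightLim f x ≤ 0}

/-- `u` changes sign at `s ∈ I`. -/
def ChangesSignAt (I : Set ℝ) (u : ℝ → ℝ) (s : ℝ) : Prop :=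
  ∃ δ > (0 : ℝ), Ioo (s - δ) (s + δ) ⊆ I ∧
    (((∀ x ∈ Ioo (s - δ) s, leftLim u x < 0) ∧ ∀ x ∈ Ioo s (s + δ), 0 < rightLim u x) ∨
     ((∀ x ∈ Ioo (s - δ) s, 0 < leftLim u x) ∧ ∀ x ∈ Ioo s (s + δ), rightLim u x < 0))

/-- `u` changes sign in `J` (a subinterval of `I`). -/
def ChangesSignIn (I : Set ℝ) (u : ℝ → ℝ) (J : Set ℝ) : Prop :=
  ∃ s ∈ J, ChangesSignAt I u s

/-- `u` and `v` are linearly dependent on `I`. -/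
def LinDepOn (I : Set ℝ) (u v : ℝ → ℝ) : Prop :=
  ∃ c₁ c₂ : ℝ, ¬(c₁ = 0 ∧ c₂ = 0) ∧ ∀ x ∈ I, c₁ * u x + c₂ * v x = 0

/-- The Lebesgue–Stieltjes measure `dg` is nonnegative on (Borel subsets of) `S`, expressed by
nonnegativity on all subintervals of `S` of each of the four kinds. -/
def PosMeasureOn (g : ℝ → ℝ) (S : Set ℝ) : Prop :=
  (∀ x y : ℝ, x ≤ y → Icc x y ⊆ S → 0 ≤ rightLim g y - leftLim g x) ∧
  (∀ x y : ℝ, x ≤ y → Ico x y ⊆ S → 0 ≤ leftLim g y - leftLim g x) ∧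
  (∀ x y : ℝ, x ≤ y → Ioc x y ⊆ S → 0 ≤ rightLim g y - rightLim g x) ∧
  (∀ x y : ℝ, x < y → Ioo x y ⊆ S → 0 ≤ leftLim g y - rightLim g x)

/-! If `f x₀ ≠ 0`, the balance condition `f = r f⁻ + (1 - r) f⁺` forces a nonzero one-sided limit
at `x₀`, so `f` has no zero on some open interval `(c, d)`. Vanishing `dα`-a.e. then makes `(c, d)`
null for the total variation of `dα`, so the right limits of `α` are constant on `(c, d)`; the left
limits, being limits of right limits, take the same constant value. Thus `(c, d)` is `dα`-null,
contradicting `supp(dα) = (a, b)`. -/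

section OneSidedLimits

variable {α E : Type*} [LinearOrder α] [TopologicalSpace α] [OrderTopology α]
  [PseudoEMetricSpace E] [CompleteSpace E] {f : α → E} {s : Set α} {x : α}

theorem LocallyBoundedVariationOn.tendsto_rightLim (hf : LocallyBoundedVariationOn f s)
    (hs : s ∈ 𝓝[≥] x) : Tendsto f (𝓝[>] x) (𝓝 (rightLim f x)) := by
  obtain ⟨b, hxb, hmem, hsub⟩ := exists_Icc_mem_subset_of_mem_nhdsGE hs
  have hbv : BoundedVariationOn f (Icc x b) := by
    simpa [inter_eq_self_of_subset_right hsub] using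
      hf x b (hsub (left_mem_Icc.2 hxb)) (hsub (right_mem_Icc.2 hxb))
  obtain ⟨l, hl⟩ := hbv.exists_tendsto_right x
  rw [nhdsWithin_inter_of_mem (nhdsWithin_mono _ Ioi_subset_Ici_self hmem)] at hl
  exact tendsto_rightLim_of_tendsto ⟨l, hl⟩

theorem LocallyBoundedVariationOn.tendsto_leftLim (hf : LocallyBoundedVariationOn f s)
    (hs : s ∈ 𝓝[≤] x) : Tendsto f (𝓝[<] x) (𝓝 (leftLim f x)) := by
  obtain ⟨b, hbx, hmem, hsub⟩ := exists_Icc_mem_subset_of_mem_nhdsLE hs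
  have hbv : BoundedVariationOn f (Icc b x) := by
    simpa [inter_eq_self_of_subset_right hsub] using
      hf b x (hsub (left_mem_Icc.2 hbx)) (hsub (right_mem_Icc.2 hbx))
  obtain ⟨l, hl⟩ := hbv.exists_tendsto_left x
  rw [nhdsWithin_inter_of_mem (nhdsWithin_mono _ Iio_subset_Iic_self hmem)] at hl
  exact tendsto_leftLim_of_tendsto ⟨l, hl⟩

end OneSidedLimits

theorem leftLim_eq_of_rightLim_eqOn {α β : Type*} [LinearOrder α] [TopologicalSpace α]
    [OrderTopology α] [TopologicalSpace β] [T3Space β] {f : α → β} {c x : α} {K : β}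
    [(𝓝[<] x).NeBot] (hcx : c < x) (hf : Tendsto f (𝓝[<] x) (𝓝 (leftLim f x)))
    (hK : ∀ p ∈ Ioo c x, rightLim f p = K) : leftLim f x = K := by
  rw [← leftLim_rightLim hf]
  refine leftLim_eq_of_tendsto (tendsto_const_nhds.congr' ?_)
  filter_upwards [Ioo_mem_nhdsLT hcx] with p hp using (hK p hp).symm

theorem SMRepresents.rightLim_eq_of_totalVariation_eq_zero {ν : SignedMeasure ℝ} {g : ℝ → ℝ}
    {c d : ℝ} (hν : SMRepresents ν g c d) (h0 : ν.totalVariation (Ioo c d) = 0) {p q : ℝ}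
    (hp : p ∈ Ioo c d) (hq : q ∈ Ioo c d) : rightLim g p = rightLim g q := by
  wlog hpq : p ≤ q generalizing p q
  · exact (this hq hp (le_of_not_ge hpq)).symm
  have hIoc : ν (Ioc p q) = 0 := ν.null_of_totalVariation_zero <|
    measure_mono_null (Ioc_subset_Ioo hp.1.le hq.2) h0
  have := hν p (Ioo_subset_Icc_self hp) q (Ioo_subset_Icc_self hq) hpq
  linarith

theorem isOpen_EI (a b : EReal) : IsOpen (EI a b) :=
  isOpen_Ioo.preimage continuous_coe_real_ereal

theorem RBalancedC.exists_Ioo_subset_ne_zero {r : ℂ} {I : Set ℝ} {f : ℝ → ℂ}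
    (hf : RBalancedC r I f) (hI : IsOpen I) {x : ℝ} (hx : x ∈ I) (hfx : f x ≠ 0) :
    ∃ c d, c < d ∧ Ioo c d ⊆ I ∧ ∀ t ∈ Ioo c d, f t ≠ 0 := by
  have hInhds : I ∈ 𝓝 x := hI.mem_nhds hx
  have hlim : leftLim f x ≠ 0 ∨ rightLim f x ≠ 0 := by
    by_contra! h
    exact hfx (by rw [hf.2 x hx, h.1, h.2]; ring)
  rcases hlim with hleft | hright
  · have hmem : {t | f t ≠ 0} ∩ I ∈ 𝓝[<] x :=
      inter_mem (hf.1.tendsto_leftLim (mem_nhdsWithin_of_mem_nhds hInhds)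
        (isOpen_ne.mem_nhds hleft)) (mem_nhdsWithin_of_mem_nhds hInhds)
    obtain ⟨c, hc, hsub⟩ := mem_nhdsLT_iff_exists_Ioo_subset.1 hmem
    exact ⟨c, x, hc, fun t ht => (hsub ht).2, fun t ht => (hsub ht).1⟩
  · have hmem : {t | f t ≠ 0} ∩ I ∈ 𝓝[>] x :=
      inter_mem (hf.1.tendsto_rightLim (mem_nhdsWithin_of_mem_nhds hInhds)
        (isOpen_ne.mem_nhds hright)) (mem_nhdsWithin_of_mem_nhds hInhds)
    obtain ⟨d, hd, hsub⟩ := mem_nhdsGT_iff_exists_Ioo_subset.1 hmem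
    exact ⟨x, d, hd, fun t ht => (hsub ht).2, fun t ht => (hsub ht).1⟩

theorem rightLim_leftLim_const_of_totalVariation_eq_zero {I : Set ℝ} {α : ℝ → ℂ}
    {νre νim : SignedMeasure ℝ} {c d : ℝ} (hα : LocallyBoundedVariationOn α I)
    (hcd : Ioo c d ⊆ I) (hre : SMRepresents νre (fun x => (α x).re) c d)
    (him : SMRepresents νim (fun x => (α x).im) c d)
    (h0re : νre.totalVariation (Ioo c d) = 0) (h0im : νim.totalVariation (Ioo c d) = 0) :
    ∀ p ∈ Ioo c d, ∀ q ∈ Ioo c d, rightLim α p = rightLim α q ∧ leftLim α p = rightLim α q := by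
  have hnhds (p : ℝ) (hp : p ∈ Ioo c d) : I ∈ 𝓝 p :=
    mem_of_superset (isOpen_Ioo.mem_nhds hp) hcd
  have hcomp (g : ℂ → ℝ) (hg : Continuous g) (p : ℝ) (hp : p ∈ Ioo c d) :
      rightLim (fun x => g (α x)) p = g (rightLim α p) :=
    rightLim_eq_of_tendsto <| (hg.tendsto _).comp <|
      hα.tendsto_rightLim (mem_nhdsWithin_of_mem_nhds (hnhds p hp))
  have hright (p : ℝ) (hp : p ∈ Ioo c d) (q : ℝ) (hq : q ∈ Ioo c d) :
      rightLim α p = rightLim α q := by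
    have e_re := hre.rightLim_eq_of_totalVariation_eq_zero h0re hp hq
    have e_im := him.rightLim_eq_of_totalVariation_eq_zero h0im hp hq
    rw [hcomp _ Complex.continuous_re p hp, hcomp _ Complex.continuous_re q hq] at e_re
    rw [hcomp _ Complex.continuous_im p hp, hcomp _ Complex.continuous_im q hq] at e_im
    exact Complex.ext e_re e_im
  intro p hp q hq
  refine ⟨hright p hp q hq, leftLim_eq_of_rightLim_eqOn hp.1 ?_ fun t ht => ?_⟩
  · exact hα.tendsto_leftLim (mem_nhdsWithin_of_mem_nhds (hnhds p hp))
  · exact hright t ⟨ht.1, ht.2.trans hp.2⟩ q hq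

theorem SuppFull.not_limits_const {I : Set ℝ} {α : ℝ → ℂ} (hsupp : SuppFull I α) {c d : ℝ}
    (hcd : c < d) (hI : Icc c d ⊆ I) :
    ¬ ∀ p ∈ Ioo c d, ∀ q ∈ Ioo c d, rightLim α p = rightLim α q ∧ leftLim α p = rightLim α q := by
  have h := hsupp ((c + d) / 2) (hI ⟨by linarith, by linarith⟩) ((d - c) / 2) (by linarith)
  rw [show (c + d) / 2 - (d - c) / 2 = c by ring, show (c + d) / 2 + (d - c) / 2 = d by ring] at h
  exact h hI

theorem statement1_general (a b : EReal) (r : ℂ) (α f : ℝ → ℂ)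
    (hα : LocallyBoundedVariationOn α (EI a b))
    (hsupp : SuppFull (EI a b) α)
    (hf : RBalancedC r (EI a b) f)
    (hae : ∀ c ∈ EI a b, ∀ d ∈ EI a b, c < d →
      ∃ νre νim : SignedMeasure ℝ,
        SMRepresents νre (fun x => (α x).re) c d ∧
        SMRepresents νim (fun x => (α x).im) c d ∧
        ∀ᵐ x ∂((νre.totalVariation + νim.totalVariation).restrict (Ioc c d)), f x = 0) :
    ∀ x ∈ EI a b, f x = 0 := by
  intro x hx
  by_contra hfx
  obtain ⟨l, u, hlu, hI, hne⟩ := hf.exists_Ioo_subset_ne_zero (isOpen_EI a b) hx hfx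
  obtain ⟨c, hlc, hcu⟩ := exists_between hlu
  obtain ⟨d, hcd, hdu⟩ := exists_between hcu
  have hcdI : Icc c d ⊆ Ioo l u := Icc_subset_Ioo hlc hdu
  obtain ⟨νre, νim, hre, him, hzero⟩ :=
    hae c (hcdI.trans hI ⟨le_rfl, hcd.le⟩) d (hcdI.trans hI ⟨hcd.le, le_rfl⟩) hcd
  have hnull : (νre.totalVariation + νim.totalVariation).restrict (Ioc c d) (Ioo c d) = 0 :=
    measure_mono_null (fun t ht => hne t (hcdI (Ioo_subset_Icc_self ht))) (ae_iff.1 hzero)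
  rw [Measure.restrict_apply measurableSet_Ioo, inter_eq_self_of_subset_left Ioo_subset_Ioc_self,
    Measure.add_apply, add_eq_zero] at hnull
  exact hsupp.not_limits_const hcd (hcdI.trans hI) <|
    rightLim_leftLim_const_of_totalVariation_eq_zero hα ((Ioo_subset_Icc_self.trans hcdI).trans hI)
      hre him hnull.1 hnull.2

/-- Theorem 3.2: if `supp(dα) = (a,b)` and the `r`-balanced function `f`
vanishes `dα`-almost everywhere (w.r.t. the total variation measure of `dα`), then `f` vanishes
identically on `(a,b)`. -/
theorem statement1 (a b : EReal) (hab : a < b) (r : ℂ) (α f : ℝ → ℂ)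
    (hα : LocallyBoundedVariationOn α (EI a b))
    (hsupp : SuppFull (EI a b) α)
    (hf : RBalancedC r (EI a b) f)
    (hae : ∀ c ∈ EI a b, ∀ d ∈ EI a b, c < d →
      ∃ νre νim : SignedMeasure ℝ,
        SMRepresents νre (fun x => (α x).re) c d ∧
        SMRepresents νim (fun x => (α x).im) c d ∧
        ∀ᵐ x ∂((νre.totalVariation + νim.totalVariation).restrict (Ioc c d)), f x = 0) :
    ∀ x ∈ EI a b, f x = 0 :=
  statement1_general a b r α f hα hsupp hf hae
end
end

section
/- Let f ∈ BV_loc((a,b),ℝ) and let [s,t] ⊂ (a,b). If y₀ is a number strictly between f^-(s) and f^-(t), then there exists x₀ ∈ [s,t] such that y₀ lies between f^-(x₀) and f^+(x₀), inclusive. -/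
open Set Filter Function MeasureTheory Topology

noncomputable section

/-!
Take `x₀ = sup {x ∈ [s,t] | f⁻(x) ≤ y₀}`. One-sided limits exist because `f` has locally bounded
variation, so `f⁻(x₀) ≤ y₀` follows by approximating `x₀` from the left inside the set, and
`f⁺(x₀) < y₀` is impossible because it would put points to the right of `x₀` into the set.
-/

section LocallyBoundedVariationOn

variable {α E : Type*} [LinearOrder α] [TopologicalSpace α] [OrderTopology α]
  [PseudoEMetricSpace E] [CompleteSpace E] {f : α → E} {s : Set α} {x : α}

theorem LocallyBoundedVariationOn.tendsto_leftLim_of_mem_nhds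
    (hf : LocallyBoundedVariationOn f s) (hs : s ∈ 𝓝 x) :
    Tendsto f (𝓝[<] x) (𝓝 (leftLim f x)) := by
  obtain ⟨c, d, hx, hcd, hcds⟩ := exists_Icc_mem_subset_of_mem_nhds hs
  have hbv : BoundedVariationOn f (Icc c d) := by
    simpa [inter_eq_right.2 hcds] using
      hf c d (hcds (left_mem_Icc.2 (hx.1.trans hx.2))) (hcds (right_mem_Icc.2 (hx.1.trans hx.2)))
  obtain ⟨l, hl⟩ := hbv.exists_tendsto_left x
  rw [nhdsWithin_inter_of_mem (mem_nhdsWithin_of_mem_nhds hcd)] at hl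
  exact tendsto_leftLim_of_tendsto ⟨l, hl⟩

theorem LocallyBoundedVariationOn.tendsto_rightLim_of_mem_nhds
    (hf : LocallyBoundedVariationOn f s) (hs : s ∈ 𝓝 x) :
    Tendsto f (𝓝[>] x) (𝓝 (rightLim f x)) :=
  hf.ofDual.tendsto_leftLim_of_mem_nhds (x := OrderDual.toDual x) hs

end LocallyBoundedVariationOn

theorem exists_mem_Icc_leftLim_le_le_rightLim
    {α β : Type*} [ConditionallyCompleteLinearOrder α] [TopologicalSpace α] [OrderTopology α]
    [DenselyOrdered α] [LinearOrder β] [TopologicalSpace β] [OrderClosedTopology β]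
    [DenselyOrdered β] {f : α → β} {s t : α} {y : β} (hst : s ≤ t)
    (hL : ∀ x ∈ Icc s t, Tendsto f (𝓝[<] x) (𝓝 (leftLim f x)))
    (hR : ∀ x ∈ Icc s t, Tendsto f (𝓝[>] x) (𝓝 (rightLim f x)))
    (hs : leftLim f s < y) (ht : y < leftLim f t) :
    ∃ x ∈ Icc s t, leftLim f x ≤ y ∧ y ≤ rightLim f x := by
  set B := {x ∈ Icc s t | leftLim f x ≤ y}
  have hsB : s ∈ B := ⟨left_mem_Icc.2 hst, hs.le⟩
  have hBdd : BddAbove B := ⟨t, fun x hx => hx.1.2⟩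
  set x₀ := sSup B
  have hx₀ : x₀ ∈ Icc s t := ⟨le_csSup hBdd hsB, csSup_le ⟨s, hsB⟩ fun x hx => hx.1.2⟩
  have hleft : leftLim f x₀ ≤ y := by
    by_contra! hy
    obtain ⟨m, hym, hm⟩ := exists_between hy
    have hsx₀ : s < x₀ := hx₀.1.lt_of_ne fun h => lt_asymm (h ▸ hs) hy
    obtain ⟨l, hlx₀, hl⟩ := (mem_nhdsLT_iff_exists_Ioo_subset' hsx₀).1
      ((hL x₀ hx₀).eventually (eventually_gt_nhds hm))
    obtain ⟨x, hxB, hlx⟩ := exists_lt_of_lt_csSup ⟨s, hsB⟩ hlx₀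
    have : (𝓝[<] x).NeBot := nhdsLT_neBot_of_exists_lt ⟨l, hlx⟩
    have hmx : m ≤ leftLim f x := ge_of_tendsto (hL x hxB.1) <|
      mem_of_superset (Ioo_mem_nhdsLT hlx) fun u hu =>
        (hl ⟨hu.1, hu.2.trans_le (le_csSup hBdd hxB)⟩).le
    exact not_lt_of_ge (hmx.trans hxB.2) hym
  refine ⟨x₀, hx₀, hleft, ?_⟩
  by_contra! hy
  obtain ⟨m, hm, hmy⟩ := exists_between hy
  have hx₀t : x₀ < t := hx₀.2.lt_of_ne fun h => not_lt_of_ge (h ▸ hleft) ht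
  obtain ⟨r, hx₀r, hr⟩ := (mem_nhdsGT_iff_exists_Ioo_subset' hx₀t).1
    ((hR x₀ hx₀).eventually (eventually_lt_nhds hm))
  obtain ⟨x, hx₀x, hxrt⟩ := exists_between (lt_min hx₀r hx₀t)
  have hx : x ∈ Icc s t := ⟨hx₀.1.trans hx₀x.le, (hxrt.trans_le (min_le_right r t)).le⟩
  have : (𝓝[<] x).NeBot := nhdsLT_neBot_of_exists_lt ⟨x₀, hx₀x⟩
  have hxm : leftLim f x ≤ m := le_of_tendsto (hL x hx) <|
    mem_of_superset (Ioo_mem_nhdsLT hx₀x) fun u hu =>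
      (hr ⟨hu.1, hu.2.trans (hxrt.trans_le (min_le_left r t))⟩).le
  exact not_lt_of_ge (le_csSup hBdd ⟨hx, hxm.trans hmy.le⟩) hx₀x

theorem statement4_general (a b : EReal) (f : ℝ → ℝ)
    (hf : LocallyBoundedVariationOn f (EI a b))
    (s t y₀ : ℝ) (hst : s ≤ t) (hsub : Icc s t ⊆ EI a b)
    (hy : (leftLim f s < y₀ ∧ y₀ < leftLim f t) ∨ (leftLim f t < y₀ ∧ y₀ < leftLim f s)) :
    ∃ x₀ ∈ Icc s t,
      (leftLim f x₀ ≤ y₀ ∧ y₀ ≤ rightLim f x₀) ∨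
      (rightLim f x₀ ≤ y₀ ∧ y₀ ≤ leftLim f x₀) := by
  have hopen : IsOpen (EI a b) := isOpen_Ioo.preimage continuous_coe_real_ereal
  have hL (x) (hx : x ∈ Icc s t) := hf.tendsto_leftLim_of_mem_nhds (hopen.mem_nhds (hsub hx))
  have hR (x) (hx : x ∈ Icc s t) := hf.tendsto_rightLim_of_mem_nhds (hopen.mem_nhds (hsub hx))
  rcases hy with ⟨hs, ht⟩ | ⟨ht, hs⟩
  · obtain ⟨x₀, hx₀, h⟩ := exists_mem_Icc_leftLim_le_le_rightLim hst hL hR hs ht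
    exact ⟨x₀, hx₀, .inl h⟩
  · -- the decreasing case is the increasing one for `f` with values in the order dual `ℝᵒᵈ`
    obtain ⟨x₀, hx₀, hleft, hright⟩ :=
      exists_mem_Icc_leftLim_le_le_rightLim (f := OrderDual.toDual ∘ f) (y := OrderDual.toDual y₀)
        hst hL hR hs ht
    exact ⟨x₀, hx₀, .inr ⟨hright, hleft⟩⟩

/-- Corollary 4.2: if `y₀` lies strictly between `f⁻(s)` and `f⁻(t)` for some
`[s,t] ⊆ (a,b)`, then `y₀` lies between `f⁻(x₀)` and `f⁺(x₀)`, inclusive, for some `x₀ ∈ [s,t]`. -/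
theorem statement4 (a b : EReal) (hab : a < b) (f : ℝ → ℝ)
    (hf : LocallyBoundedVariationOn f (EI a b))
    (s t y₀ : ℝ) (hst : s ≤ t) (hsub : Icc s t ⊆ EI a b)
    (hy : (leftLim f s < y₀ ∧ y₀ < leftLim f t) ∨ (leftLim f t < y₀ ∧ y₀ < leftLim f s)) :
    ∃ x₀ ∈ Icc s t,
      (leftLim f x₀ ≤ y₀ ∧ y₀ ≤ rightLim f x₀) ∨
      (rightLim f x₀ ≤ y₀ ∧ y₀ ≤ leftLim f x₀) :=
  statement4_general a b f hf s t y₀ hst hsub hy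
end
end

section
/- Assume r ∈ [0,1] is fixed, α is strictly increasing on (a,b), β ∈ BV_loc((a,b),ℝ), and θ_{1−r}(x) ≠ 0 and θ_r(x) ≠ 0 for all x ∈ (a,b). Let u be a nontrivial real-valued r-balanced solution of −d(dy/dα) + y dβ = 0 on (a,b) and let s ∈ (a,b). If u(s) = 0, then u changes sign at s. -/
open Set Filter Function MeasureTheory Topology

noncomputable section

/-!
Since `u(s) = 0`, the atom of `dw = u dβ` at `s` vanishes, so `w` is continuous at `s`, and the
balance condition with `du = w dα` gives `u⁺(s) = r w(s) Δα(s)` and `u⁻(s) = -(1 - r) w(s) Δα(s)`.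

If `w(s) = 0`, all one-sided limits of `u` and `w` vanish at `s`. A Gronwall-type argument (the
increments of `u, w` over a set of `|dα| + |dβ|`-mass at most `1/2` are at most half the sup of
`|u|, |w|`) makes `u, w` vanish on a one-sided neighbourhood of a zero of their one-sided limits,
and `θ_{1-r}, θ_r ≠ 0` let the vanishing cross the atoms of `dα`, `dβ`; so `u ≡ 0`, contradicting
nontriviality.

If `w(s) ≠ 0`, `w` keeps the sign of `w(s)` near `s`. Since `dα` is a positive measure charging
every interval, `u⁺(x) - u⁺(s) = ∫_{(s,x]} w dα` and `u⁻(s) - u⁻(x) = ∫_{[x,s)} w dα` then have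
the sign of `w(s)` strictly, which together with the values of `u^±(s)` makes `u` change sign.
-/

section OneSidedLimits

variable {f : ℝ → ℝ} {c d s x L : ℝ}

theorem tendsto_rightLim_nhdsLT (h : Tendsto f (𝓝[<] x) (𝓝 L)) :
    Tendsto (rightLim f) (𝓝[<] x) (𝓝 L) := by
  refine (closed_nhds_basis L).tendsto_right_iff.2 fun S ⟨hS, hSc⟩ => ?_
  obtain ⟨y, hyx, hy⟩ := mem_nhdsLT_iff_exists_Ioo_subset.1 (h hS)
  filter_upwards [Ioo_mem_nhdsLT hyx] with z hz
  exact hSc.mem_of_mapClusterPt (mapClusterPt_rightLim f z) (mem_of_superset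
    (Ico_mem_nhdsGE hz.2) fun t ht => hy ⟨hz.1.trans_le ht.1, ht.2⟩)

theorem BoundedVariationOn.tendsto_leftLim_of_mem (hf : BoundedVariationOn f (Icc c d))
    (hx : x ∈ Ioc c d) : Tendsto f (𝓝[<] x) (𝓝 (f.leftLim x)) := by
  obtain ⟨l, hl⟩ := hf.exists_tendsto_left x
  have hI : Icc c d ∩ Iio x = Ico c x := by
    ext t; simp only [mem_inter_iff, mem_Icc, mem_Iio, mem_Ico]
    exact ⟨fun h => ⟨h.1.1, h.2⟩, fun h => ⟨⟨h.1, h.2.le.trans hx.2⟩, h.2⟩⟩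
  rw [hI, nhdsWithin_Ico_eq_nhdsLT hx.1] at hl
  exact tendsto_leftLim_of_tendsto ⟨l, hl⟩

theorem BoundedVariationOn.tendsto_rightLim_of_mem (hf : BoundedVariationOn f (Icc c d))
    (hx : x ∈ Ico c d) : Tendsto f (𝓝[>] x) (𝓝 (f.rightLim x)) := by
  obtain ⟨l, hl⟩ := hf.exists_tendsto_right x
  have hI : Icc c d ∩ Ioi x = Ioc x d := by
    ext t; simp only [mem_inter_iff, mem_Icc, mem_Ioi, mem_Ioc]
    exact ⟨fun h => ⟨h.2, h.1.2⟩, fun h => ⟨⟨hx.1.trans h.1.le, h.2⟩, h.1⟩⟩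
  rw [hI, nhdsWithin_Ioc_eq_nhdsGT hx.2] at hl
  exact tendsto_rightLim_of_tendsto ⟨l, hl⟩

theorem BoundedVariationOn.exists_abs_le (hf : BoundedVariationOn f (Icc c d)) :
    ∃ B, ∀ x ∈ Icc c d, |f x| ≤ B := by
  rcases (Icc c d).eq_empty_or_nonempty with h | ⟨x₀, hx₀⟩
  · exact ⟨0, by simp [h]⟩
  refine ⟨|f x₀| + (eVariationOn f (Icc c d)).toReal, fun x hx => ?_⟩
  have hdist : dist (f x) (f x₀) ≤ (eVariationOn f (Icc c d)).toReal := by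
    rw [dist_edist]; exact ENNReal.toReal_mono hf (eVariationOn.edist_le f hx hx₀)
  rw [Real.dist_eq] at hdist
  linarith [abs_sub_abs_le_abs_sub (f x) (f x₀)]

theorem BoundedVariationOn.integrableOn (hf : BoundedVariationOn f (Icc c d))
    (μ : Measure ℝ) [IsFiniteMeasure μ] {E : Set ℝ} (hE : E ⊆ Icc c d) : IntegrableOn f E μ := by
  obtain ⟨p, q, hp, hq, rfl⟩ := hf.locallyBoundedVariationOn.exists_monotoneOn_sub_monotoneOn
  obtain ⟨B, hB⟩ := hf.exists_abs_le
  refine IntegrableOn.mono_set (Integrable.of_bound ?_ B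
    (ae_restrict_of_forall_mem measurableSet_Icc fun x hx => hB x hx)) hE
  exact ((aemeasurable_restrict_of_monotoneOn measurableSet_Icc hp).sub
    (aemeasurable_restrict_of_monotoneOn measurableSet_Icc hq)).aestronglyMeasurable

theorem LocallyBoundedVariationOn.boundedVariationOn_Icc {I : Set ℝ}
    (hf : LocallyBoundedVariationOn f I) (hcd : c ≤ d) (hsub : Icc c d ⊆ I) :
    BoundedVariationOn f (Icc c d) := by
  simpa [inter_eq_right.2 hsub] using hf c d (hsub ⟨le_rfl, hcd⟩) (hsub ⟨hcd, le_rfl⟩)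

theorem MonotoneOn.boundedVariationOn_Icc (hf : MonotoneOn f (Icc c d)) (hcd : c ≤ d) :
    BoundedVariationOn f (Icc c d) := by
  simpa using hf.locallyBoundedVariationOn c d ⟨le_rfl, hcd⟩ ⟨hcd, le_rfl⟩

theorem StrictMonoOn.rightLim_lt_rightLim (hf : StrictMonoOn f (Icc c d)) (hs : c ≤ s)
    (hsx : s < x) (hx : x < d) : rightLim f s < rightLim f x := by
  have hbv := hf.monotoneOn.boundedVariationOn_Icc (hs.trans (hsx.trans hx).le)
  obtain ⟨t₁, hst₁, ht₁x⟩ := exists_between hsx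
  obtain ⟨t₂, ht₁₂, ht₂x⟩ := exists_between ht₁x
  have hmem : ∀ {t}, s ≤ t → t ≤ d → t ∈ Icc c d := fun h h' => ⟨hs.trans h, h'⟩
  calc rightLim f s ≤ f t₁ := le_of_tendsto (hbv.tendsto_rightLim_of_mem ⟨hs, hsx.trans hx⟩) <| by
        filter_upwards [Ioo_mem_nhdsGT hst₁] with y hy
        exact hf.monotoneOn (hmem hy.1.le (hy.2.trans (ht₁x.trans hx)).le)
          (hmem hst₁.le (ht₁x.trans hx).le) hy.2.le
    _ < f t₂ := hf (hmem hst₁.le (ht₁x.trans hx).le) (hmem (hst₁.trans ht₁₂).le (ht₂x.trans hx).le)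
        ht₁₂
    _ ≤ rightLim f x := ge_of_tendsto (hbv.tendsto_rightLim_of_mem ⟨hs.trans hsx.le, hx⟩) <| by
        filter_upwards [Ioo_mem_nhdsGT hx] with y hy
        exact hf.monotoneOn (hmem (hst₁.trans ht₁₂).le (ht₂x.trans hx).le)
          (hmem (hsx.trans hy.1).le hy.2.le) (ht₂x.trans hy.1).le

theorem StrictMonoOn.leftLim_lt_leftLim (hf : StrictMonoOn f (Icc c d)) (hx : c < x)
    (hxs : x < s) (hs : s ≤ d) : leftLim f x < leftLim f s := by
  have hbv := hf.monotoneOn.boundedVariationOn_Icc (hx.trans (hxs.trans_le hs)).le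
  obtain ⟨t, hxt, hts⟩ := exists_between hxs
  have hmem : ∀ {t}, c ≤ t → t ≤ s → t ∈ Icc c d := fun h h' => ⟨h, h'.trans hs⟩
  have hxd : x ≤ d := (hxs.trans_le hs).le
  calc leftLim f x ≤ f x := le_of_tendsto (hbv.tendsto_leftLim_of_mem ⟨hx, hxd⟩) <| by
        filter_upwards [Ioo_mem_nhdsLT hx] with y hy
        exact hf.monotoneOn (hmem hy.1.le (hy.2.trans hxs).le) (hmem hx.le hxs.le) hy.2.le
    _ < f t := hf (hmem hx.le hxs.le) (hmem (hx.trans hxt).le hts.le) hxt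
    _ ≤ leftLim f s := ge_of_tendsto (hbv.tendsto_leftLim_of_mem ⟨hx.trans hxs, hs⟩) <| by
        filter_upwards [Ioo_mem_nhdsLT hts] with y hy
        exact hf.monotoneOn (hmem (hx.trans hxt).le hts.le) (hmem (hx.trans (hxt.trans hy.1)).le
          hy.2.le) hy.1.le

theorem leftLim_eq_zero_of_forall_Ioo (hsx : s < x) (hf : ∀ τ ∈ Ioo s x, f τ = 0) :
    leftLim f x = 0 :=
  leftLim_eq_of_tendsto (tendsto_const_nhds.congr' <| by
    filter_upwards [Ioo_mem_nhdsLT hsx] with τ hτ using (hf τ hτ).symm)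

theorem rightLim_eq_zero_of_forall_Ioo (hxs : x < s) (hf : ∀ τ ∈ Ioo x s, f τ = 0) :
    rightLim f x = 0 :=
  rightLim_eq_of_tendsto (tendsto_const_nhds.congr' <| by
    filter_upwards [Ioo_mem_nhdsGT hxs] with τ hτ using (hf τ hτ).symm)

end OneSidedLimits

section SignedMeasures

variable {ν : SignedMeasure ℝ} {f h : ℝ → ℝ} {c d x y : ℝ}

theorem sInt_singleton : sInt ν h {x} = h x * ν {x} := by
  rw [sInt, integral_singleton, integral_singleton, ν.apply_eq_posPart_real_sub_negPart_real
    (measurableSet_singleton x)]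
  simp only [smul_eq_mul]
  ring

theorem abs_sInt_le {E : Set ℝ} {C : ℝ} (hC : ∀ t ∈ E, |h t| ≤ C) :
    |sInt ν h E| ≤ C * ν.totalVariation.real E := by
  have key : ∀ μ : Measure ℝ, IsFiniteMeasure μ → |∫ t in E, h t ∂μ| ≤ C * μ.real E := by
    intro μ _
    simpa [Real.norm_eq_abs, measureReal_def, Measure.restrict_apply_univ] using
      norm_setIntegral_le_of_norm_le_const (μ := μ) (f := h) (measure_lt_top μ E)
        fun t ht => by simpa [Real.norm_eq_abs] using hC t ht
  rw [SignedMeasure.totalVariation, measureReal_add_apply, mul_add]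
  exact (abs_sub _ _).trans (add_le_add (key _ inferInstance) (key _ inferInstance))

theorem SMRepresents.apply_Ioo (hν : SMRepresents ν f c d) (hf : BoundedVariationOn f (Icc c d))
    (hx : c ≤ x) (hxy : x < y) (hy : y ≤ d) : ν (Ioo x y) = leftLim f y - rightLim f x := by
  obtain ⟨z, hzmono, hz, hzy⟩ := exists_seq_strictMono_tendsto' hxy
  have hunion : (⋃ n, Ioc x (z n)) = Ioo x y := by
    refine Subset.antisymm (iUnion_subset fun n => Ioc_subset_Ioo_right (hz n).2) fun t ht => ?_
    obtain ⟨n, hn⟩ := (hzy.eventually (lt_mem_nhds ht.2)).exists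
    exact mem_iUnion.2 ⟨n, ht.1, hn.le⟩
  have hlim := VectorMeasure.tendsto_vectorMeasure_iUnion_atTop_nat (v := ν)
    (s := fun n => Ioc x (z n))
    (fun m n hmn => Ioc_subset_Ioc_right (hzmono.monotone hmn)) fun n => measurableSet_Ioc
  rw [hunion] at hlim
  refine tendsto_nhds_unique hlim ?_
  have hz' : Tendsto z atTop (𝓝[<] y) :=
    tendsto_nhdsWithin_iff.2 ⟨hzy, Eventually.of_forall fun n => (hz n).2⟩
  refine (((tendsto_rightLim_nhdsLT (hf.tendsto_leftLim_of_mem ⟨hx.trans_lt hxy, hy⟩)).comp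
    hz').sub_const (rightLim f x)).congr fun n => ?_
  exact (hν x ⟨hx, hxy.le.trans hy⟩ (z n) ⟨hx.trans (hz n).1.le, (hz n).2.le.trans hy⟩
    (hz n).1.le).symm

theorem SMRepresents.apply_singleton (hν : SMRepresents ν f c d)
    (hf : BoundedVariationOn f (Icc c d)) (hx : x ∈ Ioc c d) : ν {x} = jump f x := by
  obtain ⟨z, hcz, hzx⟩ := exists_between hx.1
  have hIoc := hν z ⟨hcz.le, hzx.le.trans hx.2⟩ x ⟨hx.1.le, hx.2⟩ hzx.le
  rw [← Ioo_insert_right hzx, insert_eq, VectorMeasure.of_union (by simp)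
    (measurableSet_singleton x) measurableSet_Ioo, hν.apply_Ioo hf hcz.le hzx hx.2] at hIoc
  rw [jump]
  linarith

theorem SMRepresents.apply_Ico (hν : SMRepresents ν f c d) (hf : BoundedVariationOn f (Icc c d))
    (hx : c < x) (hxy : x ≤ y) (hy : y ≤ d) : ν (Ico x y) = leftLim f y - leftLim f x := by
  rcases hxy.eq_or_lt with rfl | hxy
  · simp
  rw [← Ioo_insert_left hxy, insert_eq, VectorMeasure.of_union (by simp)
    (measurableSet_singleton x) measurableSet_Ioo, hν.apply_singleton hf ⟨hx, hxy.le.trans hy⟩,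
    hν.apply_Ioo hf hx.le hxy hy, jump]
  ring

end SignedMeasures

section PositiveMeasures

variable {ν : SignedMeasure ℝ} {μ : Measure ℝ} {α h : ℝ → ℝ} {c d : ℝ} {A E : Set ℝ}

theorem MonotoneOn.exists_measure_Ioc (hα : MonotoneOn α (Icc c d)) (hcd : c ≤ d) :
    ∃ μ : Measure ℝ, IsFiniteMeasure μ ∧
      ∀ x y, c ≤ x → x ≤ y → y < d → μ.real (Ioc x y) = rightLim α y - rightLim α x := by
  set g := IccExtend hcd fun x : Icc c d => α x
  have hg : Monotone g := (monotoneOn_iff_monotone.1 hα).IccExtend hcd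
  have hlim : ∀ t, c ≤ t → t < d → rightLim g t = rightLim α t := fun t hct htd =>
    (rightLim_eq_of_tendsto ((hg.tendsto_rightLim t).congr' <| by
      filter_upwards [Ioo_mem_nhdsGT htd] with y hy
      exact IccExtend_of_mem hcd _ ⟨hct.trans hy.1.le, hy.2.le⟩)).symm
  refine ⟨hg.stieltjesFunction.measure.restrict (Icc c d),
    ⟨by simp [StieltjesFunction.measure_Icc]⟩, fun x y hcx hxy hyd => ?_⟩
  rw [measureReal_def, Measure.restrict_apply measurableSet_Ioc,
    inter_eq_left.2 (Ioc_subset_Icc_self.trans (Icc_subset_Icc hcx hyd.le)),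
    StieltjesFunction.measure_Ioc, hg.stieltjesFunction_eq, hg.stieltjesFunction_eq,
    ENNReal.toReal_ofReal (sub_nonneg.2 (hg.rightLim hxy)), hlim x hcx (hxy.trans_lt hyd),
    hlim y (hcx.trans hxy) hyd]

theorem SignedMeasure.restrict_posPart_eq [IsFiniteMeasure μ]
    (h : ∀ x y, c ≤ x → x ≤ y → y ≤ d → ν (Ioc x y) = μ.real (Ioc x y)) :
    ν.toJordanDecomposition.posPart.restrict (Ioc c d) =
      (ν.toJordanDecomposition.negPart + μ).restrict (Ioc c d) := by
  have key : ∀ x y, c ≤ x → x ≤ y → y ≤ d → ν.toJordanDecomposition.posPart (Ioc x y) =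
      (ν.toJordanDecomposition.negPart + μ) (Ioc x y) := fun x y hcx hxy hyd => by
    have hxy' := h x y hcx hxy hyd
    rw [ν.apply_eq_posPart_real_sub_negPart_real measurableSet_Ioc] at hxy'
    rw [← ENNReal.toReal_eq_toReal_iff' (measure_ne_top _ _) (measure_ne_top _ _),
      Measure.add_apply, ENNReal.toReal_add (measure_ne_top _ _) (measure_ne_top _ _)]
    simp only [measureReal_def] at hxy'
    linarith
  refine Measure.ext_of_Ioc_finite _ _ ?_ fun a b _ => ?_
  · rw [Measure.restrict_apply_univ, Measure.restrict_apply_univ]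
    rcases le_total c d with hcd | hdc
    · exact key c d le_rfl hcd le_rfl
    · simp [Ioc_eq_empty_of_le hdc]
  · rw [Measure.restrict_apply measurableSet_Ioc, Measure.restrict_apply measurableSet_Ioc,
      Ioc_inter_Ioc]
    rcases le_total (a ⊔ c) (b ⊓ d) with hle | hlt
    · exact key _ _ le_sup_right hle inf_le_right
    · simp [Ioc_eq_empty_of_le hlt]

theorem SignedMeasure.apply_eq_measureReal_of_restrict_posPart_eq [IsFiniteMeasure μ]
    (hres : ν.toJordanDecomposition.posPart.restrict A =
      (ν.toJordanDecomposition.negPart + μ).restrict A)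
    (hE : E ⊆ A) (hEm : MeasurableSet E) : ν E = μ.real E := by
  have hresE := congrArg (fun m : Measure ℝ => m E) hres
  simp only [Measure.restrict_apply hEm, inter_eq_left.2 hE, Measure.add_apply] at hresE
  rw [ν.apply_eq_posPart_real_sub_negPart_real hEm, measureReal_def, hresE,
    ENNReal.toReal_add (measure_ne_top _ _) (measure_ne_top _ _), measureReal_def,
    measureReal_def]
  ring

theorem sInt_eq_setIntegral_of_restrict_posPart_eq
    (hres : ν.toJordanDecomposition.posPart.restrict A =
      (ν.toJordanDecomposition.negPart + μ).restrict A) (hE : E ⊆ A)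
    (hneg : IntegrableOn h E ν.toJordanDecomposition.negPart) (hμ : IntegrableOn h E μ) :
    sInt ν h E = ∫ x in E, h x ∂μ := by
  have hresE := congrArg (Measure.restrict · E) hres
  simp only [Measure.restrict_restrict_of_subset hE, Measure.restrict_add] at hresE
  rw [sInt, hresE, integral_add_measure hneg hμ]
  ring

theorem mul_setIntegral_pos [IsFiniteMeasure μ] {g : ℝ → ℝ} {a : ℝ}
    (hE : MeasurableSet E) (hμE : 0 < μ.real E) (hg : IntegrableOn g E μ) (ha : a ≠ 0)
    (hclose : ∀ t ∈ E, |g t - a| ≤ |a| / 2) : 0 < a * ∫ t in E, g t ∂μ := by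
  have hlow : ∀ t ∈ E, a ^ 2 / 2 ≤ a * g t := fun t ht => by
    have h1 : |a * (g t - a)| ≤ |a| * (|a| / 2) := by
      rw [abs_mul]; exact mul_le_mul_of_nonneg_left (hclose t ht) (abs_nonneg a)
    nlinarith [neg_abs_le (a * (g t - a)), abs_mul_abs_self a]
  rw [← integral_const_mul]
  have hpos : 0 < a ^ 2 / 2 * μ.real E := by positivity
  exact hpos.trans_le
    (setIntegral_ge_of_const_le_real hE (measure_ne_top μ E) hlow (hg.const_mul a))

end PositiveMeasures

def DensityOn (νg : SignedMeasure ℝ) (h : ℝ → ℝ) (νk : SignedMeasure ℝ) (c d : ℝ) : Prop :=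
  ∀ E ⊆ Ioc c d, MeasurableSet E → νg E = sInt νk h E

section Density

variable {νg νk : SignedMeasure ℝ} {g h k : ℝ → ℝ} {c d x : ℝ}

theorem DensityOn.jump_eq (hdens : DensityOn νg h νk c d) (hg : SMRepresents νg g c d)
    (hgbv : BoundedVariationOn g (Icc c d)) (hk : SMRepresents νk k c d)
    (hkbv : BoundedVariationOn k (Icc c d)) (hx : x ∈ Ioc c d) :
    jump g x = h x * jump k x := by
  rw [← hg.apply_singleton hgbv hx, hdens {x} (singleton_subset_iff.2 hx)
    (measurableSet_singleton x), sInt_singleton, hk.apply_singleton hkbv hx]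

theorem DensityOn.abs_apply_le (hdens : DensityOn νg h νk c d) {E : Set ℝ} (hE : E ⊆ Ioc c d)
    (hEm : MeasurableSet E) {C : ℝ} (hC : ∀ t ∈ E, |h t| ≤ C) :
    |νg E| ≤ C * νk.totalVariation.real E := by
  rw [hdens E hE hEm]
  exact abs_sInt_le hC

end Density

theorem abs_le_of_balanced {r a b K : ℝ} (hr : r ∈ Icc (0 : ℝ) 1) (ha : |a| ≤ K) (hb : |b| ≤ K) :
    |r * a + (1 - r) * b| ≤ K := by
  have hr0 : 0 ≤ r := hr.1
  have hr' : 0 ≤ 1 - r := sub_nonneg.2 hr.2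
  calc |r * a + (1 - r) * b| ≤ r * |a| + (1 - r) * |b| := by
        simpa [abs_mul, abs_of_nonneg hr0, abs_of_nonneg hr'] using
          abs_add_le (r * a) ((1 - r) * b)
    _ ≤ r * K + (1 - r) * K := by gcongr
    _ = K := by ring

theorem eqOn_zero_of_le_half {g : ℝ → ℝ} {J : Set ℝ} (hg : ∀ τ ∈ J, 0 ≤ g τ)
    (hbdd : BddAbove (g '' J))
    (h : ∀ M, 0 ≤ M → (∀ τ ∈ J, g τ ≤ M) → ∀ τ ∈ J, g τ ≤ M / 2) : ∀ τ ∈ J, g τ = 0 := by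
  intro τ hτ
  have hgM : ∀ t ∈ J, g t ≤ sSup (g '' J) := fun t ht => le_csSup hbdd (mem_image_of_mem g ht)
  have hM0 : 0 ≤ sSup (g '' J) := (hg τ hτ).trans (hgM τ hτ)
  have hM : sSup (g '' J) ≤ sSup (g '' J) / 2 :=
    csSup_le ⟨g τ, mem_image_of_mem g hτ⟩ (forall_mem_image.2 (h _ hM0 hgM))
  linarith [hg τ hτ, hgM τ hτ]

theorem exists_measureReal_punctured_lt (ρ : Measure ℝ) [IsFiniteMeasure ρ] (x : ℝ) {ε : ℝ}
    (hε : 0 < ε) : ∃ δ > 0, ρ.real (Ioo (x - δ) (x + δ) \ {x}) < ε := by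
  have hempty : (⋂ δ > (0 : ℝ), Ioo (x - δ) (x + δ) \ {x}) = ∅ := by
    refine eq_empty_of_forall_notMem fun t ht => ?_
    simp only [mem_iInter, Set.mem_sdiff, mem_Ioo, mem_singleton_iff] at ht
    have hne := (ht 1 one_pos).2
    have := ht |t - x| (abs_pos.2 (sub_ne_zero.2 hne))
    cases abs_cases (t - x) <;> linarith [this.1.1, this.1.2]
  have hlim := tendsto_measure_biInter_gt (μ := ρ) (a := (0 : ℝ))
    (s := fun δ => Ioo (x - δ) (x + δ) \ {x}) (fun _ _ => (measurableSet_Ioo.diff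
      (measurableSet_singleton x)).nullMeasurableSet)
    (fun i j _ hij => sdiff_subset_sdiff_left (Ioo_subset_Ioo (by linarith) (by linarith)))
    ⟨1, one_pos, measure_ne_top _ _⟩
  rw [hempty, measure_empty] at hlim
  have hlim' := (ENNReal.tendsto_toReal ENNReal.zero_ne_top).comp hlim
  rw [ENNReal.toReal_zero] at hlim'
  obtain ⟨δ, hδε, hδ⟩ := ((hlim'.eventually_lt_const hε).and self_mem_nhdsWithin).exists
  exact ⟨δ, hδ, hδε⟩

structure LocalSolution (r : ℝ) (α β u w : ℝ → ℝ) (c d : ℝ) where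
  νu : SignedMeasure ℝ
  νw : SignedMeasure ℝ
  να : SignedMeasure ℝ
  νβ : SignedMeasure ℝ
  represents_u : SMRepresents νu u c d
  represents_w : SMRepresents νw w c d
  represents_α : SMRepresents να α c d
  represents_β : SMRepresents νβ β c d
  density_u : DensityOn νu w να c d
  density_w : DensityOn νw u νβ c d
  bv_u : BoundedVariationOn u (Icc c d)
  bv_w : BoundedVariationOn w (Icc c d)
  bv_α : BoundedVariationOn α (Icc c d)
  bv_β : BoundedVariationOn β (Icc c d)
  balanced_u : ∀ x ∈ Ioo c d, u x = r * leftLim u x + (1 - r) * rightLim u x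
  balanced_w : ∀ x ∈ Ioo c d, w x = r * leftLim w x + (1 - r) * rightLim w x

namespace LocalSolution

variable {r : ℝ} {α β u w : ℝ → ℝ} {c d s e T x : ℝ}

theorem jump_u (S : LocalSolution r α β u w c d) (hx : x ∈ Ioo c d) :
    jump u x = w x * jump α x :=
  S.density_u.jump_eq S.represents_u S.bv_u S.represents_α S.bv_α ⟨hx.1, hx.2.le⟩

theorem jump_w (S : LocalSolution r α β u w c d) (hx : x ∈ Ioo c d) :
    jump w x = u x * jump β x :=
  S.density_w.jump_eq S.represents_w S.bv_w S.represents_β S.bv_β ⟨hx.1, hx.2.le⟩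

theorem abs_apply_le_half (S : LocalSolution r α β u w c d) {J : Set ℝ} (hJ : J ⊆ Ioc c d)
    (hJρ : (S.να.totalVariation + S.νβ.totalVariation).real J ≤ 1 / 2) {M : ℝ} (hM0 : 0 ≤ M)
    (hM : ∀ t ∈ J, max |u t| |w t| ≤ M) ⦃E : Set ℝ⦄ (hEJ : E ⊆ J) (hE : MeasurableSet E) :
    |S.νu E| ≤ M / 2 ∧ |S.νw E| ≤ M / 2 := by
  have hρE := (measureReal_mono hEJ).trans hJρ
  rw [measureReal_add_apply] at hρE
  have hα := S.density_u.abs_apply_le (hEJ.trans hJ) hE fun t ht =>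
    (le_max_right _ _).trans (hM t (hEJ ht))
  have hβ := S.density_w.abs_apply_le (hEJ.trans hJ) hE fun t ht =>
    (le_max_left _ _).trans (hM t (hEJ ht))
  have h1 : 0 ≤ S.να.totalVariation.real E := measureReal_nonneg
  have h2 : 0 ≤ S.νβ.totalVariation.real E := measureReal_nonneg
  constructor <;> nlinarith

theorem bddAbove_image (S : LocalSolution r α β u w c d) {J : Set ℝ} (hJ : J ⊆ Icc c d) :
    BddAbove ((fun t => max |u t| |w t|) '' J) := by
  obtain ⟨Bu, hBu⟩ := S.bv_u.exists_abs_le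
  obtain ⟨Bw, hBw⟩ := S.bv_w.exists_abs_le
  exact ⟨max Bu Bw, forall_mem_image.2 fun t ht => max_le_max (hBu t (hJ ht)) (hBw t (hJ ht))⟩

theorem eqOn_zero_of_abs_limits_le (S : LocalSolution r α β u w c d) (hr : r ∈ Icc (0 : ℝ) 1)
    {J : Set ℝ} (hJ : J ⊆ Ioo c d)
    (h : ∀ M, 0 ≤ M → (∀ τ ∈ J, max |u τ| |w τ| ≤ M) → ∀ τ ∈ J,
      |leftLim u τ| ≤ M / 2 ∧ |rightLim u τ| ≤ M / 2 ∧
      |leftLim w τ| ≤ M / 2 ∧ |rightLim w τ| ≤ M / 2) :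
    ∀ τ ∈ J, u τ = 0 ∧ w τ = 0 := by
  have hzero := eqOn_zero_of_le_half (fun τ _ => (abs_nonneg (u τ)).trans (le_max_left _ _))
    (S.bddAbove_image (hJ.trans Ioo_subset_Icc_self)) fun M hM0 hM τ hτ => by
      obtain ⟨h1, h2, h3, h4⟩ := h M hM0 hM τ hτ
      rw [S.balanced_u τ (hJ hτ), S.balanced_w τ (hJ hτ)]
      exact max_le (abs_le_of_balanced hr h1 h2) (abs_le_of_balanced hr h3 h4)
  intro τ hτ
  have := hzero τ hτ
  exact ⟨abs_eq_zero.1 (le_antisymm (this ▸ le_max_left _ _) (abs_nonneg _)),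
    abs_eq_zero.1 (le_antisymm (this ▸ le_max_right _ _) (abs_nonneg _))⟩

theorem exists_eqOn_zero_Ioc (S : LocalSolution r α β u w c d) (hr : r ∈ Icc (0 : ℝ) 1)
    (hT : T ∈ Ioo c d) (hu : rightLim u T = 0) (hw : rightLim w T = 0) :
    ∃ t ∈ Ioo T d, ∀ τ ∈ Ioc T t, u τ = 0 ∧ w τ = 0 := by
  obtain ⟨δ, hδ, hρ⟩ := exists_measureReal_punctured_lt
    (S.να.totalVariation + S.νβ.totalVariation) T one_half_pos
  set t := min (T + δ / 2) ((T + d) / 2)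
  have htT : T < t := lt_min (by linarith) (by linarith [hT.2])
  have htd : t < d := (min_le_right _ _).trans_lt (by linarith [hT.2])
  have hJ : Ioc T t ⊆ Ioo c d := fun τ hτ => ⟨hT.1.trans hτ.1, hτ.2.trans_lt htd⟩
  have hJρ : (S.να.totalVariation + S.νβ.totalVariation).real (Ioc T t) ≤ 1 / 2 := by
    have ht : t ≤ T + δ / 2 := min_le_left _ _
    refine (measureReal_mono fun τ hτ => ?_).trans hρ.le
    exact ⟨⟨by linarith [hτ.1], by linarith [hτ.2]⟩, hτ.1.ne'⟩
  refine ⟨t, ⟨htT, htd⟩, S.eqOn_zero_of_abs_limits_le hr hJ fun M hM0 hM τ hτ => ?_⟩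
  have hsmall := S.abs_apply_le_half (hJ.trans Ioo_subset_Ioc_self) hJρ hM0 hM
  have hTc : T ∈ Icc c d := Ioo_subset_Icc_self hT
  have hτc : τ ∈ Icc c d := Ioo_subset_Icc_self (hJ hτ)
  have hIoc := hsmall (Ioc_subset_Ioc_right hτ.2) measurableSet_Ioc
  have hIoo := hsmall (Ioo_subset_Ioc_self.trans (Ioc_subset_Ioc_right hτ.2)) measurableSet_Ioo
  rw [S.represents_u T hTc τ hτc hτ.1.le, S.represents_w T hTc τ hτc hτ.1.le, hu, hw] at hIoc
  rw [S.represents_u.apply_Ioo S.bv_u hTc.1 hτ.1 hτc.2,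
    S.represents_w.apply_Ioo S.bv_w hTc.1 hτ.1 hτc.2, hu, hw] at hIoo
  simp only [sub_zero] at hIoc hIoo
  exact ⟨hIoo.1, hIoc.1, hIoo.2, hIoc.2⟩

theorem exists_eqOn_zero_Ico (S : LocalSolution r α β u w c d) (hr : r ∈ Icc (0 : ℝ) 1)
    (hT : T ∈ Ioo c d) (hu : leftLim u T = 0) (hw : leftLim w T = 0) :
    ∃ t ∈ Ioo c T, ∀ τ ∈ Ico t T, u τ = 0 ∧ w τ = 0 := by
  obtain ⟨δ, hδ, hρ⟩ := exists_measureReal_punctured_lt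
    (S.να.totalVariation + S.νβ.totalVariation) T one_half_pos
  set t := max (T - δ / 2) ((c + T) / 2)
  have htT : t < T := max_lt (by linarith) (by linarith [hT.1])
  have hct : c < t := (by linarith [hT.1] : c < (c + T) / 2).trans_le (le_max_right _ _)
  have hJ : Ico t T ⊆ Ioo c d := fun τ hτ => ⟨hct.trans_le hτ.1, hτ.2.trans hT.2⟩
  have hJρ : (S.να.totalVariation + S.νβ.totalVariation).real (Ico t T) ≤ 1 / 2 := by
    have ht : T - δ / 2 ≤ t := le_max_left _ _
    refine (measureReal_mono fun τ hτ => ?_).trans hρ.le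
    exact ⟨⟨by linarith [hτ.1], by linarith [hτ.2]⟩, hτ.2.ne⟩
  refine ⟨t, ⟨hct, htT⟩, S.eqOn_zero_of_abs_limits_le hr hJ fun M hM0 hM τ hτ => ?_⟩
  have hsmall := S.abs_apply_le_half (hJ.trans Ioo_subset_Ioc_self) hJρ hM0 hM
  have hτc := hJ hτ
  have hIco := hsmall (Ico_subset_Ico_left hτ.1) measurableSet_Ico
  have hIoo := hsmall (Ioo_subset_Ico_self.trans (Ico_subset_Ico_left hτ.1)) measurableSet_Ioo
  rw [S.represents_u.apply_Ico S.bv_u hτc.1 hτ.2.le hT.2.le,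
    S.represents_w.apply_Ico S.bv_w hτc.1 hτ.2.le hT.2.le, hu, hw] at hIco
  rw [S.represents_u.apply_Ioo S.bv_u hτc.1.le hτ.2 hT.2.le,
    S.represents_w.apply_Ioo S.bv_w hτc.1.le hτ.2 hT.2.le, hu, hw] at hIoo
  simp only [zero_sub, abs_neg] at hIco hIoo
  exact ⟨hIco.1, hIoo.1, hIco.2, hIoo.2⟩

theorem apply_and_rightLim_eq_zero_of_Ioo_left (S : LocalSolution r α β u w c d)
    (hθ : theta α β (1 - r) T ≠ 0) (hT : T ∈ Ioo c d) (hs : s < T)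
    (h : ∀ τ ∈ Ioo s T, u τ = 0 ∧ w τ = 0) :
    u T = 0 ∧ w T = 0 ∧ rightLim u T = 0 ∧ rightLim w T = 0 := by
  have hul := leftLim_eq_zero_of_forall_Ioo hs fun τ hτ => (h τ hτ).1
  have hwl := leftLim_eq_zero_of_forall_Ioo hs fun τ hτ => (h τ hτ).2
  have hju := S.jump_u hT
  have hjw := S.jump_w hT
  have hbu := S.balanced_u T hT
  have hbw := S.balanced_w T hT
  rw [jump, hul, sub_zero] at hju
  rw [jump, hwl, sub_zero] at hjw
  rw [hul, mul_zero, zero_add] at hbu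
  rw [hwl, mul_zero, zero_add] at hbw
  have huT : u T * theta α β (1 - r) T = 0 := by
    rw [theta]
    linear_combination hbu + (1 - r) * hju + (1 - r) * jump α T * (hbw + (1 - r) * hjw)
  have hu0 : u T = 0 := (mul_eq_zero.1 huT).resolve_right hθ
  have hw0 : w T = 0 := by rw [hbw, hjw, hu0]; ring
  exact ⟨hu0, hw0, by rw [hju, hw0, zero_mul], by rw [hjw, hu0, zero_mul]⟩

theorem apply_and_leftLim_eq_zero_of_Ioo_right (S : LocalSolution r α β u w c d)
    (hθ : theta α β r T ≠ 0) (hT : T ∈ Ioo c d) (hs : T < s)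
    (h : ∀ τ ∈ Ioo T s, u τ = 0 ∧ w τ = 0) :
    u T = 0 ∧ w T = 0 ∧ leftLim u T = 0 ∧ leftLim w T = 0 := by
  have hur := rightLim_eq_zero_of_forall_Ioo hs fun τ hτ => (h τ hτ).1
  have hwr := rightLim_eq_zero_of_forall_Ioo hs fun τ hτ => (h τ hτ).2
  have hju := S.jump_u hT
  have hjw := S.jump_w hT
  have hbu := S.balanced_u T hT
  have hbw := S.balanced_w T hT
  rw [jump, hur, zero_sub] at hju
  rw [jump, hwr, zero_sub] at hjw
  rw [hur, mul_zero, add_zero] at hbu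
  rw [hwr, mul_zero, add_zero] at hbw
  have huT : u T * theta α β r T = 0 := by
    rw [theta]
    linear_combination hbu - r * hju - r * jump α T * (hbw - r * hjw)
  have hu0 : u T = 0 := (mul_eq_zero.1 huT).resolve_right hθ
  have hw0 : w T = 0 := by linear_combination hbw - r * hjw - r * jump β T * hu0
  exact ⟨hu0, hw0, by linear_combination -hju - jump α T * hw0,
    by linear_combination -hjw - jump β T * hu0⟩

theorem eqOn_zero_Ioc (S : LocalSolution r α β u w c d) (hr : r ∈ Icc (0 : ℝ) 1)
    (hθ : ∀ x ∈ Ioo c d, theta α β (1 - r) x ≠ 0) (hs : s ∈ Ioo c d) (he : e < d)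
    (hu : rightLim u s = 0) (hw : rightLim w s = 0) : ∀ τ ∈ Ioc s e, u τ = 0 ∧ w τ = 0 := by
  set Z := {τ ∈ Ioc s e | ¬(u τ = 0 ∧ w τ = 0)}
  by_contra hcon
  have hZ : Z.Nonempty := by
    simp only [not_forall] at hcon
    obtain ⟨τ, hτ, h⟩ := hcon
    exact ⟨τ, hτ, h⟩
  have hZb : BddBelow Z := ⟨s, fun τ hτ => hτ.1.1.le⟩
  set T := sInf Z
  have hsT : s ≤ T := le_csInf hZ fun τ hτ => hτ.1.1.le
  have hTd : T ∈ Ioo c d :=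
    ⟨hs.1.trans_le hsT, ((csInf_le hZb hZ.some_mem).trans hZ.some_mem.1.2).trans_lt he⟩
  have hbelow : ∀ τ ∈ Ioo s T, u τ = 0 ∧ w τ = 0 := fun τ hτ => by
    by_contra h
    exact not_le.2 hτ.2 (csInf_le hZb ⟨⟨hτ.1, hτ.2.le.trans
      ((csInf_le hZb hZ.some_mem).trans hZ.some_mem.1.2)⟩, h⟩)
  have hT : rightLim u T = 0 ∧ rightLim w T = 0 ∧ (s < T → u T = 0 ∧ w T = 0) := by
    rcases hsT.eq_or_lt with hsT | hsT
    · exact ⟨hsT ▸ hu, hsT ▸ hw, fun h => absurd hsT h.ne⟩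
    · obtain ⟨h1, h2, h3, h4⟩ :=
        S.apply_and_rightLim_eq_zero_of_Ioo_left (hθ T hTd) hTd hsT hbelow
      exact ⟨h3, h4, fun _ => ⟨h1, h2⟩⟩
  obtain ⟨t, htT, hzero⟩ := S.exists_eqOn_zero_Ioc hr hTd hT.1 hT.2.1
  obtain ⟨z, hzZ, hzt⟩ := exists_lt_of_csInf_lt hZ htT.1
  rcases (csInf_le hZb hzZ).eq_or_lt with hTz | hTz
  · replace hTz : T = z := hTz
    have hzero' := hT.2.2 (hTz ▸ hzZ.1.1)
    rw [hTz] at hzero'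
    exact hzZ.2 hzero'
  · exact hzZ.2 (hzero z ⟨hTz, hzt.le⟩)

theorem eqOn_zero_Ico (S : LocalSolution r α β u w c d) (hr : r ∈ Icc (0 : ℝ) 1)
    (hθ : ∀ x ∈ Ioo c d, theta α β r x ≠ 0) (hs : s ∈ Ioo c d) (he : c < e)
    (hu : leftLim u s = 0) (hw : leftLim w s = 0) : ∀ τ ∈ Ico e s, u τ = 0 ∧ w τ = 0 := by
  set Z := {τ ∈ Ico e s | ¬(u τ = 0 ∧ w τ = 0)}
  by_contra hcon
  have hZ : Z.Nonempty := by
    simp only [not_forall] at hcon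
    obtain ⟨τ, hτ, h⟩ := hcon
    exact ⟨τ, hτ, h⟩
  have hZb : BddAbove Z := ⟨s, fun τ hτ => hτ.1.2.le⟩
  set T := sSup Z
  have hTs : T ≤ s := csSup_le hZ fun τ hτ => hτ.1.2.le
  have hTd : T ∈ Ioo c d :=
    ⟨he.trans_le (hZ.some_mem.1.1.trans (le_csSup hZb hZ.some_mem)), hTs.trans_lt hs.2⟩
  have habove : ∀ τ ∈ Ioo T s, u τ = 0 ∧ w τ = 0 := fun τ hτ => by
    by_contra h
    exact not_le.2 hτ.1 (le_csSup hZb ⟨⟨(hZ.some_mem.1.1.trans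
      (le_csSup hZb hZ.some_mem)).trans hτ.1.le, hτ.2⟩, h⟩)
  have hT : leftLim u T = 0 ∧ leftLim w T = 0 ∧ (T < s → u T = 0 ∧ w T = 0) := by
    rcases hTs.eq_or_lt with hTs | hTs
    · exact ⟨hTs ▸ hu, hTs ▸ hw, fun h => absurd hTs h.ne⟩
    · obtain ⟨h1, h2, h3, h4⟩ :=
        S.apply_and_leftLim_eq_zero_of_Ioo_right (hθ T hTd) hTd hTs habove
      exact ⟨h3, h4, fun _ => ⟨h1, h2⟩⟩
  obtain ⟨t, htT, hzero⟩ := S.exists_eqOn_zero_Ico hr hTd hT.1 hT.2.1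
  obtain ⟨z, hzZ, hzt⟩ := exists_lt_of_lt_csSup hZ htT.2
  rcases (le_csSup hZb hzZ).eq_or_lt with hTz | hTz
  · replace hTz : T = z := hTz.symm
    have hzero' := hT.2.2 (hTz ▸ hzZ.1.2)
    rw [hTz] at hzero'
    exact hzZ.2 hzero'
  · exact hzZ.2 (hzero z ⟨hzt.le, hTz⟩)

theorem limits_of_apply_eq_zero (S : LocalSolution r α β u w c d) (hs : s ∈ Ioo c d)
    (hus : u s = 0) :
    leftLim w s = w s ∧ rightLim w s = w s ∧ rightLim u s = r * (w s * jump α s) ∧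
      leftLim u s = -((1 - r) * (w s * jump α s)) := by
  have hjw := S.jump_w hs
  have hju := S.jump_u hs
  have hbw := S.balanced_w s hs
  have hbu := S.balanced_u s hs
  rw [hus, zero_mul, jump, sub_eq_zero] at hjw
  rw [jump] at hju
  rw [hjw] at hbw
  rw [hus] at hbu
  refine ⟨by linarith, by linarith, by linear_combination -hbu + r * hju, ?_⟩
  linear_combination -hbu - (1 - r) * hju

theorem eqOn_zero_of_apply_eq_zero (S : LocalSolution r α β u w c d) (hr : r ∈ Icc (0 : ℝ) 1)
    (hθ : ∀ x ∈ Ioo c d, theta α β (1 - r) x ≠ 0 ∧ theta α β r x ≠ 0) (hs : s ∈ Ioo c d)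
    (hus : u s = 0) (hws : w s = 0) : ∀ x ∈ Ioo c d, u x = 0 := by
  obtain ⟨hwl, hwr, hur, hul⟩ := S.limits_of_apply_eq_zero hs hus
  rw [hws] at hwl hwr hur hul
  simp only [zero_mul, mul_zero, neg_zero] at hur hul
  intro x hx
  rcases lt_trichotomy x s with hxs | rfl | hsx
  · exact (S.eqOn_zero_Ico hr (fun y hy => (hθ y hy).2) hs hx.1 hul hwl x ⟨le_rfl, hxs⟩).1
  · exact hus
  · exact (S.eqOn_zero_Ioc hr (fun y hy => (hθ y hy).1) hs hx.2 hur hwr x ⟨hsx, le_rfl⟩).1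

theorem exists_measure_density (S : LocalSolution r α β u w c d) (hα : MonotoneOn α (Icc c d))
    (hce : c ≤ e) (hed : e < d) : ∃ μ : Measure ℝ, IsFiniteMeasure μ ∧
      ∀ E ⊆ Ioc c e, MeasurableSet E → S.να E = μ.real E ∧ S.νu E = ∫ t in E, w t ∂μ := by
  obtain ⟨μ, hμfin, hμ⟩ := hα.exists_measure_Ioc (hce.trans hed.le)
  have hres := SignedMeasure.restrict_posPart_eq (ν := S.να) (μ := μ) (c := c) (d := e)
    fun x y hcx hxy hye => by
      rw [S.represents_α x ⟨hcx, (hxy.trans hye).trans hed.le⟩ y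
        ⟨hcx.trans hxy, hye.trans hed.le⟩ hxy, hμ x y hcx hxy (hye.trans_lt hed)]
  refine ⟨μ, hμfin, fun E hE hEm => ⟨SignedMeasure.apply_eq_measureReal_of_restrict_posPart_eq
    hres hE hEm, ?_⟩⟩
  have hEc : E ⊆ Icc c d := hE.trans (Ioc_subset_Icc_self.trans (Icc_subset_Icc_right hed.le))
  rw [S.density_u E (hE.trans (Ioc_subset_Ioc_right hed.le)) hEm]
  exact sInt_eq_setIntegral_of_restrict_posPart_eq hres hE (S.bv_w.integrableOn _ hEc)
    (S.bv_w.integrableOn _ hEc)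

theorem mul_sub_rightLim_pos (S : LocalSolution r α β u w c d) {μ : Measure ℝ} [IsFiniteMeasure μ]
    (hμ : ∀ E ⊆ Ioc c e, MeasurableSet E → S.να E = μ.real E ∧ S.νu E = ∫ t in E, w t ∂μ)
    (hα : StrictMonoOn α (Icc c d)) (hs : c < s) (hsx : s < x) (hxe : x ≤ e) (hed : e < d)
    (hws : w s ≠ 0) (hclose : ∀ t ∈ Ioc s x, |w t - w s| ≤ |w s| / 2) :
    0 < w s * (rightLim u x - rightLim u s) := by
  have hsc : s ∈ Icc c d := ⟨hs.le, (hsx.le.trans hxe).trans hed.le⟩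
  have hxc : x ∈ Icc c d := ⟨hs.le.trans hsx.le, hxe.trans hed.le⟩
  obtain ⟨hmass, hint⟩ := hμ _ (Ioc_subset_Ioc hs.le hxe) measurableSet_Ioc
  have hpos : 0 < μ.real (Ioc s x) := by
    rw [← hmass, S.represents_α s hsc x hxc hsx.le, sub_pos]
    exact hα.rightLim_lt_rightLim hs.le hsx (hxe.trans_lt hed)
  rw [← S.represents_u s hsc x hxc hsx.le, hint]
  exact mul_setIntegral_pos measurableSet_Ioc hpos
    (S.bv_w.integrableOn μ (Ioc_subset_Icc_self.trans (Icc_subset_Icc hsc.1 hxc.2))) hws hclose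

theorem mul_sub_leftLim_pos (S : LocalSolution r α β u w c d) {μ : Measure ℝ} [IsFiniteMeasure μ]
    (hμ : ∀ E ⊆ Ioc c e, MeasurableSet E → S.να E = μ.real E ∧ S.νu E = ∫ t in E, w t ∂μ)
    (hα : StrictMonoOn α (Icc c d)) (hx : c < x) (hxs : x < s) (hse : s ≤ e) (hed : e < d)
    (hws : w s ≠ 0) (hclose : ∀ t ∈ Ico x s, |w t - w s| ≤ |w s| / 2) :
    0 < w s * (leftLim u s - leftLim u x) := by
  have hsd : s ≤ d := hse.trans hed.le
  obtain ⟨hmass, hint⟩ := hμ _ (fun t ht => ⟨hx.trans_le ht.1, ht.2.le.trans hse⟩)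
    measurableSet_Ico
  have hpos : 0 < μ.real (Ico x s) := by
    rw [← hmass, S.represents_α.apply_Ico S.bv_α hx hxs.le hsd, sub_pos]
    exact hα.leftLim_lt_leftLim hx hxs hsd
  rw [← S.represents_u.apply_Ico S.bv_u hx hxs.le hsd, hint]
  exact mul_setIntegral_pos measurableSet_Ico hpos
    (S.bv_w.integrableOn μ (Ico_subset_Icc_self.trans (Icc_subset_Icc hx.le hsd))) hws hclose

theorem exists_mul_leftLim_neg_mul_rightLim_pos (S : LocalSolution r α β u w c d)
    (hr : r ∈ Icc (0 : ℝ) 1) (hα : StrictMonoOn α (Icc c d)) (hs : s ∈ Ioo c d) (hus : u s = 0)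
    (hws : w s ≠ 0) : ∃ δ > 0, Ioo (s - δ) (s + δ) ⊆ Ioo c d ∧
      (∀ x ∈ Ioo (s - δ) s, w s * leftLim u x < 0) ∧
        ∀ x ∈ Ioo s (s + δ), 0 < w s * rightLim u x := by
  obtain ⟨hwl, hwr, hur, hul⟩ := S.limits_of_apply_eq_zero hs hus
  obtain ⟨e, hse, hed⟩ := exists_between hs.2
  obtain ⟨μ, _, hμ⟩ := S.exists_measure_density hα.monotoneOn (hs.1.trans hse).le hed
  have hjα : 0 ≤ jump α s := by
    rw [← S.represents_α.apply_singleton S.bv_α ⟨hs.1, hs.2.le⟩,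
      (hμ {s} (singleton_subset_iff.2 ⟨hs.1, hse.le⟩) (measurableSet_singleton s)).1]
    exact measureReal_nonneg
  have hwc : ContinuousAt w s := by
    have hleft := S.bv_w.tendsto_leftLim_of_mem ⟨hs.1, hs.2.le⟩
    have hright := S.bv_w.tendsto_rightLim_of_mem ⟨hs.1.le, hs.2⟩
    rw [hwl] at hleft
    rw [hwr] at hright
    exact continuousAt_iff_continuous_left'_right'.2 ⟨hleft, hright⟩
  obtain ⟨δ₀, hδ₀, hclose⟩ := Metric.continuousAt_iff.1 hwc (|w s| / 2) (by positivity)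
  set δ := min δ₀ (min (s - c) (e - s))
  have hδ : 0 < δ := lt_min hδ₀ (lt_min (by linarith [hs.1]) (by linarith))
  have hδδ₀ : δ ≤ δ₀ := min_le_left _ _
  have hδc : δ ≤ s - c := (min_le_right _ _).trans (min_le_left _ _)
  have hδe : δ ≤ e - s := (min_le_right _ _).trans (min_le_right _ _)
  have hclose' : ∀ t ∈ Ioo (s - δ) (s + δ), |w t - w s| ≤ |w s| / 2 := fun t ht =>
    (hclose (by rw [Real.dist_eq, abs_sub_lt_iff]; constructor <;> linarith [ht.1, ht.2])).le
  refine ⟨δ, hδ, fun t ht => ⟨by linarith [ht.1], by linarith [ht.2]⟩, fun x hx => ?_,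
    fun x hx => ?_⟩
  · have key := S.mul_sub_leftLim_pos hμ hα (by linarith [hx.1]) hx.2 hse.le hed hws
      fun t ht => hclose' t ⟨hx.1.trans_le ht.1, by linarith [ht.2]⟩
    rw [hul] at key
    nlinarith [mul_nonneg (sub_nonneg.2 hr.2) (mul_nonneg (sq_nonneg (w s)) hjα)]
  · have key := S.mul_sub_rightLim_pos hμ hα hs.1 hx.1 (by linarith [hx.2]) hed hws
      fun t ht => hclose' t ⟨by linarith [ht.1], ht.2.trans_lt hx.2⟩
    rw [hur] at key
    nlinarith [mul_nonneg hr.1 (mul_nonneg (sq_nonneg (w s)) hjα)]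

end LocalSolution

theorem MeasureEqOn.exists_densityOn {I : Set ℝ} {g h k : ℝ → ℝ}
    (heq : MeasureEqOn I g (fun _ : Fin 1 => h) (fun _ => k)) {c d : ℝ} (hc : c ∈ I) (hd : d ∈ I)
    (hcd : c < d) :
    ∃ νg νk, SMRepresents νg g c d ∧ SMRepresents νk k c d ∧ DensityOn νg h νk c d := by
  obtain ⟨νg, ν, hg, hk, hdens⟩ := heq c hc d hd hcd
  exact ⟨νg, ν 0, hg, hk 0, fun E hE hEm => by simpa using hdens E hE hEm⟩

theorem IsHomSol.nonempty_localSolution {I : Set ℝ} {r : ℝ} {α β u w : ℝ → ℝ}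
    (hsol : IsHomSol I r α β u w) (hα : LocallyBoundedVariationOn α I)
    (hβ : LocallyBoundedVariationOn β I) {c d : ℝ} (hcd : c < d) (hsub : Icc c d ⊆ I) :
    Nonempty (LocalSolution r α β u w c d) := by
  obtain ⟨⟨hu, hbu⟩, ⟨hw, hbw⟩, hequ, heqw⟩ := hsol
  have hc : c ∈ I := hsub ⟨le_rfl, hcd.le⟩
  have hd : d ∈ I := hsub ⟨hcd.le, le_rfl⟩
  obtain ⟨νu, να, hνu, hνα, hdu⟩ := hequ.exists_densityOn hc hd hcd
  obtain ⟨νw, νβ, hνw, hνβ, hdw⟩ := heqw.exists_densityOn hc hd hcd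
  exact ⟨⟨νu, νw, να, νβ, hνu, hνw, hνα, hνβ, hdu, hdw, hu.boundedVariationOn_Icc hcd.le hsub,
    hw.boundedVariationOn_Icc hcd.le hsub, hα.boundedVariationOn_Icc hcd.le hsub,
    hβ.boundedVariationOn_Icc hcd.le hsub, fun x hx => hbu x (hsub (Ioo_subset_Icc_self hx)),
    fun x hx => hbw x (hsub (Ioo_subset_Icc_self hx))⟩⟩

theorem exists_Icc_subset_EI {a b : EReal} {x y : ℝ} (hx : x ∈ EI a b) (hy : y ∈ EI a b) :
    ∃ c d, x ∈ Ioo c d ∧ y ∈ Ioo c d ∧ Icc c d ⊆ EI a b := by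
  obtain ⟨c, hac, hc⟩ := EReal.exists_between_coe_real (lt_min hx.1 hy.1)
  obtain ⟨d, hd, hdb⟩ := EReal.exists_between_coe_real (max_lt hx.2 hy.2)
  rw [lt_min_iff, EReal.coe_lt_coe_iff, EReal.coe_lt_coe_iff] at hc
  rw [max_lt_iff, EReal.coe_lt_coe_iff, EReal.coe_lt_coe_iff] at hd
  refine ⟨c, d, ⟨hc.1, hd.1⟩, ⟨hc.2, hd.2⟩, fun t ht => ⟨?_, ?_⟩⟩
  · exact hac.trans_le (EReal.coe_le_coe_iff.2 ht.1)
  · exact (EReal.coe_le_coe_iff.2 ht.2).trans_lt hdb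

theorem changesSignAt_of_mul {I : Set ℝ} {u : ℝ → ℝ} {s δ a : ℝ} (ha : a ≠ 0) (hδ : 0 < δ)
    (hsub : Ioo (s - δ) (s + δ) ⊆ I) (hleft : ∀ x ∈ Ioo (s - δ) s, a * leftLim u x < 0)
    (hright : ∀ x ∈ Ioo s (s + δ), 0 < a * rightLim u x) : ChangesSignAt I u s := by
  refine ⟨δ, hδ, hsub, ?_⟩
  rcases ha.lt_or_gt with ha | ha
  · exact Or.inr ⟨fun x hx => pos_of_mul_neg_right (hleft x hx) ha.le,
      fun x hx => neg_of_mul_pos_right (hright x hx) ha.le⟩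
  · exact Or.inl ⟨fun x hx => neg_of_mul_neg_right (hleft x hx) ha.le,
      fun x hx => pos_of_mul_pos_right (hright x hx) ha.le⟩

theorem statement7_general (a b : EReal) (r : ℝ) (hr : r ∈ Icc (0 : ℝ) 1)
    (α β : ℝ → ℝ) (hα : StrictMonoOn α (EI a b))
    (hβ : LocallyBoundedVariationOn β (EI a b))
    (hθ : ∀ x ∈ EI a b, theta α β (1 - r) x ≠ 0 ∧ theta α β r x ≠ 0)
    (u w : ℝ → ℝ) (hsol : IsHomSol (EI a b) r α β u w)
    (hnt : ¬ ∀ x ∈ EI a b, u x = 0)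
    (s : ℝ) (hs : s ∈ EI a b) (hus : u s = 0) :
    ChangesSignAt (EI a b) u s := by
  obtain ⟨x₀, hx₀, hux₀⟩ : ∃ x ∈ EI a b, u x ≠ 0 := by simpa using hnt
  obtain ⟨c, d, hsc, hx₀c, hsub⟩ := exists_Icc_subset_EI hs hx₀
  obtain ⟨S⟩ := hsol.nonempty_localSolution hα.monotoneOn.locallyBoundedVariationOn hβ
    (hsc.1.trans hsc.2) hsub
  have hws : w s ≠ 0 := fun hws => hux₀ <| S.eqOn_zero_of_apply_eq_zero hr
    (fun x hx => hθ x (hsub (Ioo_subset_Icc_self hx))) hsc hus hws x₀ hx₀c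
  obtain ⟨δ, hδ, hδsub, hleft, hright⟩ :=
    S.exists_mul_leftLim_neg_mul_rightLim_pos hr (hα.mono hsub) hsc hus hws
  exact changesSignAt_of_mul hws hδ (hδsub.trans (Ioo_subset_Icc_self.trans hsub)) hleft hright

/-- Theorem 4.7: if `u` is a nontrivial real-valued `r`-balanced solution of
`-d(dy/dα) + y dβ = 0` and `u(s) = 0` for some `s ∈ (a,b)`, then `u` changes sign at `s`. -/
theorem statement7 (a b : EReal) (hab : a < b) (r : ℝ) (hr : r ∈ Icc (0 : ℝ) 1)
    (α β : ℝ → ℝ) (hα : StrictMonoOn α (EI a b))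
    (hβ : LocallyBoundedVariationOn β (EI a b))
    (hθ : ∀ x ∈ EI a b, theta α β (1 - r) x ≠ 0 ∧ theta α β r x ≠ 0)
    (u w : ℝ → ℝ) (hsol : IsHomSol (EI a b) r α β u w)
    (hnt : ¬ ∀ x ∈ EI a b, u x = 0)
    (s : ℝ) (hs : s ∈ EI a b) (hus : u s = 0) :
    ChangesSignAt (EI a b) u s :=
  statement7_general a b r hr α β hα hβ hθ u w hsol hnt s hs hus
end
end
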